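/- arXiv:1806.00262 — 2 statements merged into one kernel-verified Lean document; each statement's English description precedes it below -/
import Mathlib

section
/- In any Lie algebra satisfying the centre-by-metabelian identity [x,y,[u,v],z]=0, for every integer k ≥ 0 and all elements the identity [x,y,t_1,...,t_k,[u,v]] + (-1)^k [u,v,t_1,...,t_k,[x,y]] = 0 holds. -/
/-- Left-normalized Lie bracket: `lnb x [a₁,…,aₙ] = [[…[x,a₁],…],aₙ]`. -/
def lnb {L : Type*} [LieRing L] (x : L) (l : List L) : L :=
  l.foldl (fun a b => ⁅a, b⁆) x

section Aux

variable {L : Type} [LieRing L]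

lemma lnb_cons (x a : L) (l : List L) : lnb x (a :: l) = lnb ⁅x, a⁆ l := rfl

lemma lnb_concat (x b : L) (l : List L) : lnb x (l ++ [b]) = ⁅lnb x l, b⁆ := by
  simp [lnb, List.foldl_append]

lemma lnb_zero (l : List L) : lnb (0 : L) l = 0 := by
  induction l with
  | nil => rfl
  | cons a l ih => rw [lnb_cons, zero_lie]; exact ih

lemma lnb_add (x y : L) (l : List L) : lnb (x + y) l = lnb x l + lnb y l := by
  induction l generalizing x y with
  | nil => rfl
  | cons a l ih => rw [lnb_cons, add_lie, ih]; rfl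

lemma lnb_isBr {A : L} (hA : ∃ a b : L, A = ⁅a, b⁆) (l : List L) :
    ∃ a b : L, lnb A l = ⁅a, b⁆ := by
  induction l generalizing A with
  | nil => exact hA
  | cons a l ih => exact ih ⟨A, a, rfl⟩

lemma central_lnb {c : L} (hc : ∀ z : L, ⁅c, z⁆ = 0) (l : List L) (z : L) :
    ⁅lnb c l, z⁆ = 0 := by
  cases l with
  | nil => exact hc z
  | cons a l => rw [lnb_cons, hc a, lnb_zero, zero_lie]

lemma central_of_br (hcm : ∀ x y u v z : L, ⁅⁅⁅x, y⁆, ⁅u, v⁆⁆, z⁆ = 0) {A B : L} (hA : ∃ a b : L, A = ⁅a, b⁆) (hB : ∃ a b : L, B = ⁅a, b⁆) :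
    ∀ z : L, ⁅⁅A, B⁆, z⁆ = 0 := by
  obtain ⟨a, b, rfl⟩ := hA
  obtain ⟨c, d, rfl⟩ := hB
  exact hcm a b c d

/-- Rotation: move the head of the list to the end. -/
lemma rot (hcm : ∀ x y u v z : L, ⁅⁅⁅x, y⁆, ⁅u, v⁆⁆, z⁆ = 0) (l : List L) : ∀ (E t A : L), (∃ a b : L, E = ⁅a, b⁆) →
    ⁅lnb E (t :: l), A⁆ = ⁅lnb E (l ++ [t]), A⁆ := by
  induction l with
  | nil => intros; rfl
  | cons s l ih =>
    intro E t A hE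
    have h1 : ⁅⁅E, t⁆, s⁆ = ⁅⁅E, s⁆, t⁆ + ⁅E, ⁅t, s⁆⁆ := by
      rw [lie_lie, ← lie_skew t ⁅E, s⁆]
      abel
    have h2 : ⁅lnb ⁅E, ⁅t, s⁆⁆ l, A⁆ = 0 :=
      central_lnb (central_of_br hcm hE ⟨t, s, rfl⟩) l A
    calc ⁅lnb E (t :: s :: l), A⁆
        = ⁅lnb ⁅⁅E, t⁆, s⁆ l, A⁆ := rfl
      _ = ⁅lnb ⁅⁅E, s⁆, t⁆ l + lnb ⁅E, ⁅t, s⁆⁆ l, A⁆ := by rw [h1, lnb_add]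
      _ = ⁅lnb ⁅E, s⁆ (t :: l), A⁆ := by rw [add_lie, h2, add_zero]; rfl
      _ = ⁅lnb ⁅E, s⁆ (l ++ [t]), A⁆ := ih ⁅E, s⁆ t A ⟨E, s, rfl⟩
      _ = ⁅lnb E (s :: (l ++ [t])), A⁆ := rfl

variable (F : Type) [Field F] [LieAlgebra F L]

lemma key (hcm : ∀ x y u v z : L, ⁅⁅⁅x, y⁆, ⁅u, v⁆⁆, z⁆ = 0) (l : List L) : ∀ (A E : L), (∃ a b : L, A = ⁅a, b⁆) → (∃ a b : L, E = ⁅a, b⁆) →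
    ⁅lnb A l, E⁆ + ((-1 : F) ^ l.length) • ⁅lnb E l, A⁆ = 0 := by
  induction l using List.reverseRecOn with
  | nil =>
    intro A E _ _
    show ⁅A, E⁆ + (-1 : F) ^ (List.length ([] : List L)) • ⁅E, A⁆ = 0
    rw [List.length_nil, pow_zero, one_smul, ← lie_skew E A, add_neg_cancel]
  | append_singleton l t ih =>
    intro A E hA hE
    have hbr : ∀ z : L, ⁅⁅lnb A l, E⁆, z⁆ = 0 := central_of_br hcm (lnb_isBr hA l) hE
    have h1 : ⁅lnb A (l ++ [t]), E⁆ = -⁅lnb A l, ⁅E, t⁆⁆ := by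
      rw [lnb_concat, lie_lie, ← lie_skew t ⁅lnb A l, E⁆, hbr, neg_zero, sub_zero,
        ← lie_skew E t, lie_neg, neg_neg]
    have h2 : ⁅lnb A l, ⁅E, t⁆⁆ = -(((-1 : F) ^ l.length) • ⁅lnb ⁅E, t⁆ l, A⁆) :=
      eq_neg_of_add_eq_zero_left (ih A ⁅E, t⁆ hA ⟨E, t, rfl⟩)
    have h3 : ⁅lnb ⁅E, t⁆ l, A⁆ = ⁅lnb E (l ++ [t]), A⁆ := rot hcm l E t A hE
    rw [h1, h2, h3, neg_neg, List.length_append, List.length_singleton, pow_succ,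
      mul_comm, neg_one_mul, neg_smul, add_neg_cancel]

end Aux

/-- In any Lie algebra over a field of characteristic ≠ 2 satisfying the
centre-by-metabelian identity `[x,y,[u,v],z] = 0`, for every `k ≥ 0` the identity
`[x,y,t₁,…,t_k,[u,v]] + (-1)^k [u,v,t₁,…,t_k,[x,y]] = 0` holds. -/
theorem stmt1 (F : Type) [Field F] (hF : ringChar F ≠ 2)
    (L : Type) [LieRing L] [LieAlgebra F L]
    (hcm : ∀ x y u v z : L, ⁅⁅⁅x, y⁆, ⁅u, v⁆⁆, z⁆ = 0)
    (k : ℕ) (x y u v : L) (t : ℕ → L) :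
    lnb x (y :: (List.ofFn fun i : Fin k => t i) ++ [⁅u, v⁆]) +
      ((-1 : F) ^ k) • lnb u (v :: (List.ofFn fun i : Fin k => t i) ++ [⁅x, y⁆]) = 0 := by
  set l : List L := List.ofFn fun i : Fin k => t i with hl
  have hlen : l.length = k := by simp [hl]
  have h1 : lnb x (y :: l ++ [⁅u, v⁆]) = ⁅lnb ⁅x, y⁆ l, ⁅u, v⁆⁆ := by
    rw [show y :: l ++ [⁅u, v⁆] = (y :: l) ++ [⁅u, v⁆] by simp, lnb_concat]; rfl
  have h2 : lnb u (v :: l ++ [⁅x, y⁆]) = ⁅lnb ⁅u, v⁆ l, ⁅x, y⁆⁆ := by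
    rw [show v :: l ++ [⁅x, y⁆] = (v :: l) ++ [⁅x, y⁆] by simp, lnb_concat]; rfl
  rw [h1, h2, ← hlen]
  exact key (F := F) hcm l ⁅x, y⁆ ⁅u, v⁆ ⟨x, y, rfl⟩ ⟨u, v, rfl⟩
end

section
/- In the adjoint Lie algebra of M_{1,1}(E) over a field of characteristic p > 2, the identity [x,z,u^(p),v] = 0 holds for all elements (u repeated p times, left-normalized). -/
/-- The Grassmann (exterior) algebra over `F` on countably many generators. -/
abbrev GrAlg (F : Type) [Field F] := ExteriorAlgebra F (ℕ →₀ F)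

/-- The `i`-th Grassmann generator `e_i`. -/
noncomputable def gen (F : Type) [Field F] (i : ℕ) : GrAlg F :=
  ExteriorAlgebra.ι F (Finsupp.single i (1 : F))

/-- The submodule of generators (degree-one part). -/
noncomputable def grange (F : Type) [Field F] : Submodule F (GrAlg F) :=
  LinearMap.range (ExteriorAlgebra.ι F : (ℕ →₀ F) →ₗ[F] GrAlg F)

/-- The even part `E^1_0` of the unital Grassmann algebra: span of `1` and
products of even length. -/
noncomputable def evenPart1 (F : Type) [Field F] : Submodule F (GrAlg F) :=
  ⨆ n : ℕ, (grange F) ^ (2 * n)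

/-- The even part `E_0` of the non-unital Grassmann algebra: span of
products of even positive length. -/
noncomputable def evenPart (F : Type) [Field F] : Submodule F (GrAlg F) :=
  ⨆ n : ℕ, (grange F) ^ (2 * (n + 1))

/-- The odd part `E_1`: span of products of odd length. -/
noncomputable def oddPart (F : Type) [Field F] : Submodule F (GrAlg F) :=
  ⨆ n : ℕ, (grange F) ^ (2 * n + 1)

/-- The set of matrices of `M_{1,1}`: diagonal entries in `D`, off-diagonal
entries in the odd part. -/
def M11carrier (F : Type) [Field F] (D : Submodule F (GrAlg F)) :
    Set (Matrix (Fin 2) (Fin 2) (GrAlg F)) :=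
  {A | A 0 0 ∈ D ∧ A 1 1 ∈ D ∧ A 0 1 ∈ oddPart F ∧ A 1 0 ∈ oddPart F}

attribute [local instance] LieRing.ofAssociativeRing

/-!
Since `E_0` is central and odd elements anticommute, `[x, z]` has equal diagonal entries, and
bracketing such a matrix with `u` keeps the diagonal entries equal (and central) while
multiplying the off-diagonal entries by `±δ`, where `δ = u₁₁ - u₀₀ ∈ E_0`. In characteristic `p`
the Frobenius map is additive on the commutative algebra `E_0`, which is spanned by monomials of
square zero, so `δ ^ p = 0`. Hence `[x, z, u^(p)]` is a scalar matrix with central entry, and it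
commutes with `v`.
-/

open Pointwise

namespace ExteriorAlgebra

variable {R M : Type*} [CommRing R] [AddCommGroup M] [Module R M]

theorem ι_mul_comm_of_mem_pow {n : ℕ} {x : ExteriorAlgebra R M}
    (hx : x ∈ LinearMap.range (ι R) ^ n) (m : M) :
    ι R m * x = (-1 : ℤ) ^ n • (x * ι R m) := by
  induction hx using Submodule.pow_induction_on_left' with
  | algebraMap r => simp [Algebra.commutes]
  | add x y i _ _ ihx ihy => rw [mul_add, add_mul, ihx, ihy, smul_add]
  | mem_mul a ha i x _ ih =>
    obtain ⟨a, rfl⟩ := ha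
    rw [← mul_assoc, ← neg_neg (ι R m * ι R a), neg_eq_of_add_eq_zero_left (ι_add_mul_swap a m),
      neg_mul, mul_assoc, ih, mul_smul_comm, pow_succ, mul_neg_one, neg_smul, mul_assoc]

theorem mul_comm_of_mem_pow {n k : ℕ} {x y : ExteriorAlgebra R M}
    (hx : x ∈ LinearMap.range (ι R) ^ n) (hy : y ∈ LinearMap.range (ι R) ^ k) :
    x * y = (-1 : ℤ) ^ (n * k) • (y * x) := by
  induction hx using Submodule.pow_induction_on_left' with
  | algebraMap r => simp [Algebra.commutes]
  | add a b i _ _ iha ihb => rw [add_mul, mul_add, iha, ihb, smul_add]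
  | mem_mul g hg i a _ ih =>
    obtain ⟨g, rfl⟩ := hg
    rw [mul_assoc, ih, mul_smul_comm, ← mul_assoc, ι_mul_comm_of_mem_pow hy, smul_mul_assoc,
      smul_smul, ← pow_add, mul_assoc, Nat.succ_mul]

theorem commute_of_mem_pow_of_even {n : ℕ} {x : ExteriorAlgebra R M}
    (hx : x ∈ LinearMap.range (ι R) ^ n) (hn : Even n) (y : ExteriorAlgebra R M) :
    Commute x y := by
  induction y using ExteriorAlgebra.induction with
  | algebraMap r => exact (Algebra.commutes r x).symm
  | ι m => rw [Commute, SemiconjBy, ι_mul_comm_of_mem_pow hx, hn.neg_one_pow, one_smul]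
  | mul a b iha ihb => exact iha.mul_right ihb
  | add a b iha ihb => exact iha.add_right ihb

theorem mul_self_eq_zero_of_mem_pow_succ {k : ℕ} {y : ExteriorAlgebra R M}
    (hy : y ∈ Set.range (ι R) ^ (k + 1)) : y * y = 0 := by
  rw [pow_succ'] at hy
  obtain ⟨_, ⟨m, rfl⟩, a, ha, rfl⟩ := Set.mem_mul.mp hy
  have ha' : a ∈ LinearMap.range (ι R) ^ k :=
    Submodule.pow_subset_pow _ (by rwa [LinearMap.coe_range])
  nth_rw 1 [ι_mul_comm_of_mem_pow ha' m]
  rw [smul_mul_assoc, mul_assoc a, ← mul_assoc (ι R m), ι_sq_zero,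
    zero_mul, mul_zero, smul_zero]

end ExteriorAlgebra

theorem pow_eq_zero_of_mem_span_of_expChar {K A : Type*} [CommSemiring K] [Semiring A]
    [Algebra K A] (p : ℕ) [ExpChar A p] {S : Set A}
    (hcomm : ∀ a ∈ Submodule.span K S, ∀ b ∈ Submodule.span K S, Commute a b)
    (hS : ∀ s ∈ S, s ^ p = 0) {a : A} (ha : a ∈ Submodule.span K S) : a ^ p = 0 := by
  induction ha using Submodule.span_induction with
  | mem s hs => exact hS s hs
  | zero => exact zero_pow (expChar_ne_zero A p)
  | add x y hx hy ihx ihy => rw [add_pow_expChar_of_commute p (hcomm x hx y hy), ihx, ihy, add_zero]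
  | smul c x _ ih => rw [smul_pow, ih, smul_zero]

section Grassmann

variable {F : Type} [Field F]

theorem commute_of_mem_evenPart {a : GrAlg F} (ha : a ∈ evenPart F) (b : GrAlg F) :
    Commute a b := by
  refine Submodule.iSup_induction _ (motive := (Commute · b)) ha (fun n a ha => ?_)
    (Commute.zero_left b) (fun _ _ => Commute.add_left)
  exact ExteriorAlgebra.commute_of_mem_pow_of_even ha (even_two_mul _) b

theorem evenPart_mul_oddPart_le : evenPart F * oddPart F ≤ oddPart F := by
  simp only [evenPart, oddPart, Submodule.iSup_mul, Submodule.mul_iSup, ← pow_add]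
  exact iSup₂_le fun n m => le_iSup_of_le (n + m + 1) (le_of_eq (by ring_nf))

theorem oddPart_mul_oddPart_le : oddPart F * oddPart F ≤ evenPart F := by
  simp only [evenPart, oddPart, Submodule.iSup_mul, Submodule.mul_iSup, ← pow_add]
  exact iSup₂_le fun n m => le_iSup_of_le (n + m) (le_of_eq (by ring_nf))

theorem mul_mem_oddPart_of_mem_evenPart {a b : GrAlg F} (ha : a ∈ evenPart F)
    (hb : b ∈ oddPart F) : a * b ∈ oddPart F :=
  evenPart_mul_oddPart_le (Submodule.mul_mem_mul ha hb)

theorem mul_mem_evenPart_of_mem_oddPart {a b : GrAlg F} (ha : a ∈ oddPart F)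
    (hb : b ∈ oddPart F) : a * b ∈ evenPart F :=
  oddPart_mul_oddPart_le (Submodule.mul_mem_mul ha hb)

theorem mul_eq_neg_mul_of_mem_oddPart {a b : GrAlg F} (ha : a ∈ oddPart F)
    (hb : b ∈ oddPart F) : a * b = -(b * a) := by
  let anticomm : GrAlg F →ₗ[F] GrAlg F →ₗ[F] GrAlg F := LinearMap.mul F _ + (LinearMap.mul F _).flip
  suffices Submodule.map₂ anticomm (oddPart F) (oddPart F) = ⊥ from
    eq_neg_of_add_eq_zero_left <| (Submodule.mem_bot F).mp <|
      this ▸ Submodule.apply_mem_map₂ anticomm ha hb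
  simp only [oddPart, Submodule.map₂_iSup_left, Submodule.map₂_iSup_right, iSup_eq_bot]
  intro m n
  rw [eq_bot_iff, Submodule.map₂_le]
  intro a ha b hb
  rw [Submodule.mem_bot]
  simp only [anticomm, LinearMap.add_apply, LinearMap.flip_apply, LinearMap.mul_apply',
    ExteriorAlgebra.mul_comm_of_mem_pow ha hb,
    (Nat.odd_mul.mpr ⟨odd_two_mul_add_one n, odd_two_mul_add_one m⟩).neg_one_pow, neg_one_smul,
    neg_add_cancel]

theorem evenPart_eq_span :
    evenPart F = Submodule.span F (⋃ n : ℕ, Set.range (ExteriorAlgebra.ι F) ^ (2 * (n + 1))) := by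
  simp only [Submodule.span_iUnion, ← Submodule.span_pow, ← LinearMap.coe_range,
    Submodule.span_eq]
  rfl

theorem pow_eq_zero_of_mem_evenPart (p : ℕ) [Fact p.Prime] [CharP F p] {a : GrAlg F}
    (ha : a ∈ evenPart F) : a ^ p = 0 := by
  have : CharP (GrAlg F) p :=
    charP_of_injective_algebraMap (ExteriorAlgebra.algebraMap_leftInverse _).injective p
  rw [evenPart_eq_span] at ha
  refine pow_eq_zero_of_mem_span_of_expChar p (fun a ha b _ => ?_) (fun s hs => ?_) ha
  · rw [← evenPart_eq_span] at ha
    exact commute_of_mem_evenPart ha b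
  · obtain ⟨n, hs⟩ := Set.mem_iUnion.mp hs
    refine pow_eq_zero_of_le (Fact.out : p.Prime).two_le ?_
    rw [sq]
    exact ExteriorAlgebra.mul_self_eq_zero_of_mem_pow_succ (k := 2 * n + 1) hs

end Grassmann

theorem lnb_append_singleton {L : Type*} [LieRing L] (x y : L) (l : List L) :
    lnb x (l ++ [y]) = ⁅lnb x l, y⁆ := by
  simp [lnb, List.foldl_append]

theorem lnb_replicate_succ {L : Type*} [LieRing L] (x y : L) (k : ℕ) :
    lnb x (List.replicate (k + 1) y) = ⁅lnb x (List.replicate k y), y⁆ := by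
  rw [List.replicate_succ', lnb_append_singleton]

namespace Matrix

theorem lie_apply_fin_two {R : Type*} [Ring R] (A B : Matrix (Fin 2) (Fin 2) R) (i j : Fin 2) :
    ⁅A, B⁆ i j = A i 0 * B 0 j + A i 1 * B 1 j - (B i 0 * A 0 j + B i 1 * A 1 j) := by
  simp [Ring.lie_def, mul_apply, Fin.sum_univ_two]

end Matrix

section M11

open Matrix

variable {F : Type} [Field F] {A B : Matrix (Fin 2) (Fin 2) (GrAlg F)}

theorem lie_apply_zero_zero_of_mem_M11carrier (hA : A ∈ M11carrier F (evenPart F))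
    (B : Matrix (Fin 2) (Fin 2) (GrAlg F)) :
    ⁅A, B⁆ 0 0 = A 0 1 * B 1 0 - B 0 1 * A 1 0 := by
  rw [lie_apply_fin_two, (commute_of_mem_evenPart hA.1 (B 0 0)).eq]
  abel

theorem lie_apply_one_one_of_mem_M11carrier (hA : A ∈ M11carrier F (evenPart F))
    (hB : B ∈ M11carrier F (evenPart F)) :
    ⁅A, B⁆ 1 1 = A 0 1 * B 1 0 - B 0 1 * A 1 0 := by
  rw [lie_apply_fin_two, (commute_of_mem_evenPart hA.2.1 (B 1 1)).eq,
    mul_eq_neg_mul_of_mem_oddPart hA.2.2.2 hB.2.2.1,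
    mul_eq_neg_mul_of_mem_oddPart hB.2.2.2 hA.2.2.1]
  abel

theorem lie_apply_zero_one_of_diag_eq (hA : A 0 0 ∈ evenPart F) (hA' : A 0 0 = A 1 1)
    (hB : B ∈ M11carrier F (evenPart F)) :
    ⁅A, B⁆ 0 1 = (B 1 1 - B 0 0) * A 0 1 := by
  rw [lie_apply_fin_two, ← hA', (commute_of_mem_evenPart hA (B 0 1)).eq,
    sub_mul, (commute_of_mem_evenPart hB.1 (A 0 1)).eq,
    (commute_of_mem_evenPart hB.2.1 (A 0 1)).eq]
  abel

theorem lie_apply_one_zero_of_diag_eq (hA : A 0 0 ∈ evenPart F) (hA' : A 0 0 = A 1 1)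
    (hB : B ∈ M11carrier F (evenPart F)) :
    ⁅A, B⁆ 1 0 = (B 0 0 - B 1 1) * A 1 0 := by
  rw [lie_apply_fin_two, ← hA', (commute_of_mem_evenPart hA (B 1 0)).eq,
    sub_mul, (commute_of_mem_evenPart hB.1 (A 1 0)).eq,
    (commute_of_mem_evenPart hB.2.1 (A 1 0)).eq]
  abel

theorem lie_mem_M11carrier (hA : A ∈ M11carrier F (evenPart F))
    (hB : B ∈ M11carrier F (evenPart F)) : ⁅A, B⁆ ∈ M11carrier F (evenPart F) := by
  obtain ⟨hA00, hA11, hA01, hA10⟩ := hA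
  obtain ⟨hB00, hB11, hB01, hB10⟩ := hB
  have hdiag : A 0 1 * B 1 0 - B 0 1 * A 1 0 ∈ evenPart F :=
    sub_mem (mul_mem_evenPart_of_mem_oddPart hA01 hB10) (mul_mem_evenPart_of_mem_oddPart hB01 hA10)
  have hoddeven {a b : GrAlg F} (ha : a ∈ oddPart F) (hb : b ∈ evenPart F) : a * b ∈ oddPart F :=
    (commute_of_mem_evenPart hb a).eq ▸ mul_mem_oddPart_of_mem_evenPart hb ha
  refine ⟨?_, ?_, ?_, ?_⟩
  · rwa [lie_apply_zero_zero_of_mem_M11carrier ⟨hA00, hA11, hA01, hA10⟩]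
  · rwa [lie_apply_one_one_of_mem_M11carrier ⟨hA00, hA11, hA01, hA10⟩ ⟨hB00, hB11, hB01, hB10⟩]
  all_goals
    rw [lie_apply_fin_two]
    refine sub_mem (add_mem ?_ ?_) (add_mem ?_ ?_) <;>
      first
      | exact mul_mem_oddPart_of_mem_evenPart ‹_› ‹_›
      | exact hoddeven ‹_› ‹_›

theorem lie_apply_zero_zero_eq_one_one (hA : A ∈ M11carrier F (evenPart F))
    (hB : B ∈ M11carrier F (evenPart F)) : ⁅A, B⁆ 0 0 = ⁅A, B⁆ 1 1 := by
  rw [lie_apply_zero_zero_of_mem_M11carrier hA, lie_apply_one_one_of_mem_M11carrier hA hB]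

theorem lnb_replicate_of_diag_eq (hA : A ∈ M11carrier F (evenPart F)) (hA' : A 0 0 = A 1 1)
    (hB : B ∈ M11carrier F (evenPart F)) (k : ℕ) :
    lnb A (List.replicate k B) ∈ M11carrier F (evenPart F) ∧
      lnb A (List.replicate k B) 0 0 = lnb A (List.replicate k B) 1 1 ∧
      lnb A (List.replicate k B) 0 1 = (B 1 1 - B 0 0) ^ k * A 0 1 ∧
      lnb A (List.replicate k B) 1 0 = (B 0 0 - B 1 1) ^ k * A 1 0 := by
  induction k with
  | zero => exact ⟨hA, hA', by simp [lnb], by simp [lnb]⟩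
  | succ k ih =>
    obtain ⟨hN, hN', h01, h10⟩ := ih
    rw [lnb_replicate_succ]
    refine ⟨lie_mem_M11carrier hN hB, lie_apply_zero_zero_eq_one_one hN hB, ?_, ?_⟩
    · rw [lie_apply_zero_one_of_diag_eq hN.1 hN' hB, h01, pow_succ', mul_assoc]
    · rw [lie_apply_one_zero_of_diag_eq hN.1 hN' hB, h10, pow_succ', mul_assoc]

theorem lie_eq_zero_of_offDiag_eq_zero (hA : A 0 0 ∈ evenPart F) (hA' : A 0 0 = A 1 1)
    (h01 : A 0 1 = 0) (h10 : A 1 0 = 0) (B : Matrix (Fin 2) (Fin 2) (GrAlg F)) : ⁅A, B⁆ = 0 := by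
  have hA_scalar : A = scalar (Fin 2) (A 0 0) := by
    ext i j
    fin_cases i <;> fin_cases j <;> simp [h01, h10, hA']
  rw [hA_scalar]
  exact (scalar_commute _ (commute_of_mem_evenPart hA) B).lie_eq

end M11

theorem stmt17_general (F : Type) [Field F] (p : ℕ) (hp : 2 < p) [CharP F p]
    (x z u v : Matrix (Fin 2) (Fin 2) (GrAlg F))
    (hx : x ∈ M11carrier F (evenPart F)) (hz : z ∈ M11carrier F (evenPart F))
    (hu : u ∈ M11carrier F (evenPart F)) :
    lnb ⁅x, z⁆ (List.replicate p u ++ [v]) = 0 := by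
  have : Fact p.Prime := ⟨CharP.char_is_prime_of_two_le F p hp.le⟩
  obtain ⟨hN, hN', hN01, hN10⟩ := lnb_replicate_of_diag_eq (lie_mem_M11carrier hx hz)
    (lie_apply_zero_zero_eq_one_one hx hz) hu p
  have hδ := pow_eq_zero_of_mem_evenPart p (sub_mem hu.2.1 hu.1)
  have hδ' := pow_eq_zero_of_mem_evenPart p (sub_mem hu.1 hu.2.1)
  rw [lnb_append_singleton]
  exact lie_eq_zero_of_offDiag_eq_zero hN.1 hN' (by rw [hN01, hδ, zero_mul])
    (by rw [hN10, hδ', zero_mul]) v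

/-- In the adjoint Lie algebra of `M_{1,1}(E)` over a field of characteristic
`p > 2`, the identity `[x,z,u^(p),v] = 0` holds. -/
theorem stmt17 (F : Type) [Field F] (p : ℕ) (hp : 2 < p) [CharP F p]
    (x z u v : Matrix (Fin 2) (Fin 2) (GrAlg F))
    (hx : x ∈ M11carrier F (evenPart F)) (hz : z ∈ M11carrier F (evenPart F))
    (hu : u ∈ M11carrier F (evenPart F)) (hv : v ∈ M11carrier F (evenPart F)) :
    lnb ⁅x, z⁆ (List.replicate p u ++ [v]) = 0 :=
  stmt17_general F p hp x z u v hx hz hu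
end
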